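/- Let φ be a smooth function on the open positive cone Γ₊ ⊂ ℝⁿ that is symmetric, elliptic (∂φ/∂z_i > 0 for each i), positively 1-homogeneous, and convex. Then φ is inverse-concave on Γ₊, i.e. the map z ↦ φ(z₁^{-1},…,z_n^{-1})^{-1} is concave on Γ₊; hence φ is an admissible speed. -/

import Mathlib

/-- The open positive cone `Γ₊ ⊂ ℝⁿ`. -/
def PosCone (n : ℕ) : Set (Fin n → ℝ) := {z | ∀ i, 0 < z i}

/-- A smooth function on the open positive cone is an admissible speed if it is symmetric,
elliptic (all first partials positive), positively 1-homogeneous, and inverse-concave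
(`z ↦ φ(z₁⁻¹,…,z_n⁻¹)⁻¹` is concave on the cone). -/
def IsAdmissibleSpeed {n : ℕ} (φ : (Fin n → ℝ) → ℝ) : Prop :=
  ContDiffOn ℝ (⊤ : ℕ∞) φ (PosCone n) ∧
  (∀ σ : Equiv.Perm (Fin n), ∀ z ∈ PosCone n, φ (z ∘ σ) = φ z) ∧
  (∀ z ∈ PosCone n, ∀ i, 0 < fderiv ℝ φ z (Pi.single i 1)) ∧
  (∀ z ∈ PosCone n, ∀ c : ℝ, 0 < c → φ (c • z) = c * φ z) ∧
  ConcaveOn ℝ (PosCone n) (fun z => (φ fun i => (z i)⁻¹)⁻¹)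

lemma posCone_isOpen (n : ℕ) : IsOpen (PosCone n) := by
  have : PosCone n = ⋂ i, (fun z : Fin n → ℝ => z i) ⁻¹' Set.Ioi 0 := by
    ext z; simp [PosCone]
  rw [this]
  exact isOpen_iInter_of_finite fun i => (isOpen_Ioi).preimage (continuous_apply i)

lemma posCone_convex (n : ℕ) : Convex ℝ (PosCone n) := by
  intro x hx y hy a b ha hb hab
  intro i
  simp only [Pi.add_apply, Pi.smul_apply, smul_eq_mul]
  rcases eq_or_lt_of_le ha with h | h
  · have hb1 : b = 1 := by linarith
    simpa [← h, hb1] using hy i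
  · have h1 : 0 < a * x i := mul_pos h (hx i)
    have h2 : 0 ≤ b * y i := mul_nonneg hb (hy i).le
    linarith

lemma cs_coord (p q l m : ℝ) (hp : 0 < p) (hq : 0 < q) (h : l + m = 1) :
    (p+q)⁻¹ ≤ l^2*p⁻¹+m^2*q⁻¹ := by
  rw [inv_eq_one_div, inv_eq_one_div, inv_eq_one_div, mul_one_div, mul_one_div,
    div_add_div _ _ (ne_of_gt hp) (ne_of_gt hq), div_le_div_iff₀ (by positivity) (by positivity)]
  have key : p*q = (l+m)^2*(p*q) := by rw [h]; ring
  nlinarith [sq_nonneg (l*q - m*p)]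

/-- A smooth, symmetric, elliptic, positively 1-homogeneous, convex function on the open
positive cone is inverse-concave, and hence an admissible speed. -/
theorem convex_implies_inverse_concave {n : ℕ} (φ : (Fin n → ℝ) → ℝ)
    (hsmooth : ContDiffOn ℝ (⊤ : ℕ∞) φ (PosCone n))
    (hsym : ∀ σ : Equiv.Perm (Fin n), ∀ z ∈ PosCone n, φ (z ∘ σ) = φ z)
    (hell : ∀ z ∈ PosCone n, ∀ i, 0 < fderiv ℝ φ z (Pi.single i 1))
    (hhomog : ∀ z ∈ PosCone n, ∀ c : ℝ, 0 < c → φ (c • z) = c * φ z)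
    (hconv : ConvexOn ℝ (PosCone n) φ) :
    ConcaveOn ℝ (PosCone n) (fun z => (φ fun i => (z i)⁻¹)⁻¹) ∧ IsAdmissibleSpeed φ := by
  set F : (Fin n → ℝ) → ℝ := fun z => (φ fun i => (z i)⁻¹)⁻¹ with hF
  suffices hconc : ConcaveOn ℝ (PosCone n) F by
    exact ⟨hconc, hsmooth, hsym, hell, hhomog, hconc⟩
  -- trivial case n = 0
  rcases Nat.eq_zero_or_pos n with hn | hn
  · refine ⟨posCone_convex n, ?_⟩
    intro x hx y hy a b ha hb hab
    subst hn
    have hxy : x = y := Subsingleton.elim x y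
    have hs : a • x + b • y = x := by
      rw [hxy, ← add_smul, hab, one_smul]
    rw [hs, hxy, ← add_smul, hab, one_smul]
  have hne : Nonempty (Fin n) := ⟨⟨0, hn⟩⟩
  -- differentiability
  have hdiff : ∀ z ∈ PosCone n, HasFDerivAt φ (fderiv ℝ φ z) z := by
    intro z hz
    have : DifferentiableAt ℝ φ z :=
      (hsmooth.contDiffAt ((posCone_isOpen n).mem_nhds hz)).differentiableAt (by simp)
    exact this.hasFDerivAt
  -- expansion of the differential
  have expand : ∀ z, ∀ w : Fin n → ℝ,
      fderiv ℝ φ z w = ∑ i, w i * fderiv ℝ φ z (Pi.single i 1) := by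
    intro z w
    have hw : w = ∑ i, w i • (Pi.single i 1 : Fin n → ℝ) := by
      funext j; simp [Pi.single_apply]
    conv_lhs => rw [hw]
    rw [map_sum]
    simp
  -- Euler's identity
  have euler : ∀ z ∈ PosCone n, fderiv ℝ φ z z = φ z := by
    intro z hz
    have hγ : HasDerivAt (fun c : ℝ => c • z) z 1 := by
      simpa using (hasDerivAt_id (1:ℝ)).smul_const z
    have h1 : HasDerivAt (fun c : ℝ => φ (c • z)) (fderiv ℝ φ z z) 1 := by
      have hd : HasFDerivAt φ (fderiv ℝ φ z) ((1:ℝ) • z) := by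
        rw [one_smul]; exact hdiff z hz
      exact hd.comp_hasDerivAt 1 hγ
    have heq : (fun c : ℝ => φ (c • z)) =ᶠ[nhds 1] fun c => c * φ z := by
      filter_upwards [Ioi_mem_nhds one_pos] with c hc
      exact hhomog z hz c hc
    have h2 : HasDerivAt (fun c : ℝ => c * φ z) (fderiv ℝ φ z z) 1 :=
      h1.congr_of_eventuallyEq heq.symm
    have h3 : HasDerivAt (fun c : ℝ => c * φ z) (φ z) 1 := hasDerivAt_mul_const (φ z)
    exact h2.unique h3
  -- positivity
  have hpos : ∀ z ∈ PosCone n, 0 < φ z := by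
    intro z hz
    rw [← euler z hz, expand z z]
    exact Finset.sum_pos (fun i _ => mul_pos (hz i) (hell z hz i)) Finset.univ_nonempty
  -- monotonicity
  have mono : ∀ u ∈ PosCone n, ∀ v ∈ PosCone n, (∀ i, u i ≤ v i) → φ u ≤ φ v := by
    intro u hu v hv huv
    set γ : ℝ → (Fin n → ℝ) := fun t => u + t • (v - u) with hγdef
    have hmem : ∀ t ∈ Set.Icc (0:ℝ) 1, γ t ∈ PosCone n := by
      intro t ht i
      have := hu i; have := hv i; have := huv i
      simp only [hγdef, Pi.add_apply, Pi.smul_apply, Pi.sub_apply, smul_eq_mul]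
      nlinarith [ht.1, ht.2]
    have hder : ∀ t ∈ Set.Icc (0:ℝ) 1,
        HasDerivAt (fun s => φ (γ s)) (fderiv ℝ φ (γ t) (v - u)) t := by
      intro t ht
      have hγ' : HasDerivAt γ (v - u) t := by
        have := ((hasDerivAt_id t).smul_const (v - u)).const_add u
        rw [one_smul] at this
        exact this
      exact (hdiff (γ t) (hmem t ht)).comp_hasDerivAt t hγ'
    have hcont : ContinuousOn (fun s => φ (γ s)) (Set.Icc 0 1) :=
      fun t ht => ((hder t ht).continuousAt).continuousWithinAt
    have hmono : MonotoneOn (fun s => φ (γ s)) (Set.Icc 0 1) := by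
      apply monotoneOn_of_deriv_nonneg (convex_Icc 0 1) hcont
      · intro t ht
        rw [interior_Icc] at ht
        exact (hder t ⟨ht.1.le, ht.2.le⟩).differentiableAt.differentiableWithinAt
      · intro t ht
        rw [interior_Icc] at ht
        rw [(hder t ⟨ht.1.le, ht.2.le⟩).deriv, expand]
        apply Finset.sum_nonneg
        intro i _
        exact mul_nonneg (by simpa using sub_nonneg.mpr (huv i))
          (hell (γ t) (hmem t ⟨ht.1.le, ht.2.le⟩) i).le
    have h01 := hmono (Set.left_mem_Icc.mpr zero_le_one) (Set.right_mem_Icc.mpr zero_le_one)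
      zero_le_one
    simpa [hγdef] using h01
  -- membership helpers
  have hinv_mem : ∀ z ∈ PosCone n, (fun i => (z i)⁻¹) ∈ PosCone n := by
    intro z hz i; exact inv_pos.mpr (hz i)
  have hsmul_mem : ∀ z ∈ PosCone n, ∀ c : ℝ, 0 < c → c • z ∈ PosCone n := by
    intro z hz c hc i
    exact mul_pos hc (hz i)
  -- homogeneity of F
  have Fhomog : ∀ z ∈ PosCone n, ∀ c : ℝ, 0 < c → F (c • z) = c * F z := by
    intro z hz c hc
    have h1 : (fun i => ((c • z) i)⁻¹) = c⁻¹ • fun i => (z i)⁻¹ := by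
      funext i; simp [mul_inv, mul_comm]
    rw [hF]
    simp only
    rw [h1, hhomog _ (hinv_mem z hz) c⁻¹ (inv_pos.mpr hc), mul_inv, inv_inv]
  -- superadditivity of F
  have superadd : ∀ x ∈ PosCone n, ∀ y ∈ PosCone n, F x + F y ≤ F (x + y) := by
    intro x hx y hy
    set u : Fin n → ℝ := fun i => (x i)⁻¹ with hu
    set v : Fin n → ℝ := fun i => (y i)⁻¹ with hv
    have hum : u ∈ PosCone n := hinv_mem x hx
    have hvm : v ∈ PosCone n := hinv_mem y hy
    have hA : 0 < φ u := hpos u hum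
    have hB : 0 < φ v := hpos v hvm
    set a : ℝ := (φ u)⁻¹ with ha
    set b : ℝ := (φ v)⁻¹ with hb
    have ha0 : 0 < a := inv_pos.mpr hA
    have hb0 : 0 < b := inv_pos.mpr hB
    have hab : 0 < a + b := by linarith
    set l : ℝ := a / (a + b) with hl
    set m : ℝ := b / (a + b) with hm
    have hl0 : 0 < l := div_pos ha0 hab
    have hm0 : 0 < m := div_pos hb0 hab
    have hlm : l + m = 1 := by
      rw [hl, hm, ← add_div, div_self (ne_of_gt hab)]
    -- coordinatewise bound
    have hxy : x + y ∈ PosCone n := fun i => add_pos (hx i) (hy i)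
    have hcoord : ∀ i, ((x + y) i)⁻¹ ≤ (l^2 • u + m^2 • v) i := by
      intro i
      simp only [Pi.add_apply, Pi.smul_apply, smul_eq_mul, hu, hv]
      exact cs_coord (x i) (y i) l m (hx i) (hy i) hlm
    have hmid : l^2 • u + m^2 • v ∈ PosCone n := by
      intro i
      simp only [Pi.add_apply, Pi.smul_apply, smul_eq_mul]
      exact add_pos (mul_pos (by positivity) (hum i)) (mul_pos (by positivity) (hvm i))
    have step1 : φ (fun i => ((x + y) i)⁻¹) ≤ φ (l^2 • u + m^2 • v) :=
      mono _ (hinv_mem _ hxy) _ hmid hcoord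
    -- convexity step
    have hlu : l • u ∈ PosCone n := hsmul_mem u hum l hl0
    have hmv : m • v ∈ PosCone n := hsmul_mem v hvm m hm0
    have step2 : φ (l^2 • u + m^2 • v) ≤ l * φ (l • u) + m * φ (m • v) := by
      have := hconv.2 hlu hmv hl0.le hm0.le hlm
      simpa [smul_smul, ← sq] using this
    have step3 : l * φ (l • u) + m * φ (m • v) = (a + b)⁻¹ := by
      rw [hhomog u hum l hl0, hhomog v hvm m hm0]
      have hφu : φ u = a⁻¹ := by rw [ha, inv_inv]
      have hφv : φ v = b⁻¹ := by rw [hb, inv_inv]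
      rw [hφu, hφv, hl, hm]
      field_simp
    have hle : φ (fun i => ((x + y) i)⁻¹) ≤ (a + b)⁻¹ := by
      calc φ (fun i => ((x + y) i)⁻¹) ≤ φ (l^2 • u + m^2 • v) := step1
        _ ≤ l * φ (l • u) + m * φ (m • v) := step2
        _ = (a + b)⁻¹ := step3
    have hw : 0 < φ (fun i => ((x + y) i)⁻¹) := hpos _ (hinv_mem _ hxy)
    have : a + b ≤ (φ (fun i => ((x + y) i)⁻¹))⁻¹ := by
      have h2 := inv_anti₀ hw hle
      rwa [inv_inv] at h2
    simpa [hF, ha, hb] using this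
  -- conclude concavity
  refine ⟨posCone_convex n, ?_⟩
  intro x hx y hy a b ha hb hab
  rcases eq_or_lt_of_le ha with h | h
  · have hb1 : b = 1 := by linarith
    simp [← h, hb1]
  rcases eq_or_lt_of_le hb with h' | h'
  · have ha1 : a = 1 := by linarith
    simp [← h', ha1]
  have hax : a • x ∈ PosCone n := fun i => mul_pos h (hx i)
  have hby : b • y ∈ PosCone n := fun i => mul_pos h' (hy i)
  calc a • F x + b • F y = F (a • x) + F (b • y) := by
        rw [Fhomog x hx a h, Fhomog y hy b h']; simp [smul_eq_mul]
    _ ≤ F (a • x + b • y) := superadd _ hax _ hby
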